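/- arXiv:1609.02707 — 9 statements merged into one kernel-verified Lean document; each statement's English description precedes it below -/
import Mathlib

section
/- Let E be a normed space. Then the identity of E lies in the closure of the finite-rank operators for the topology of uniform convergence on compact sets if and only if for every normed space F, every continuous linear operator T : F → E lies in the closure of the finite-rank operators in the topology of uniform convergence on compact subsets of F. -/
open Metric Set

/-- A continuous linear operator has finite rank. -/
def FinRank {E F : Type} [NormedAddCommGroup E] [NormedSpace ℝ E]
    [NormedAddCommGroup F] [NormedSpace ℝ F] (T : E →L[ℝ] F) : Prop :=
  FiniteDimensional ℝ (LinearMap.range (T : E →ₗ[ℝ] F))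

/-- The approximation property. -/
def HasAP (E : Type) [NormedAddCommGroup E] [NormedSpace ℝ E] : Prop :=
  ∀ K : Set E, IsCompact K → ∀ ε : ℝ, 0 < ε →
    ∃ S : E →L[ℝ] E, FinRank S ∧ ∀ x ∈ K, ‖S x - x‖ ≤ ε

/-- An operator ideal on the class of (real) Banach spaces. -/
structure OpIdeal where
  mem : ∀ (G E : Type) [NormedAddCommGroup G] [NormedSpace ℝ G] [CompleteSpace G]
      [NormedAddCommGroup E] [NormedSpace ℝ E] [CompleteSpace E], (G →L[ℝ] E) → Prop
  finRank_mem : ∀ (G E : Type) [NormedAddCommGroup G] [NormedSpace ℝ G] [CompleteSpace G]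
      [NormedAddCommGroup E] [NormedSpace ℝ E] [CompleteSpace E] (T : G →L[ℝ] E),
      FinRank T → mem G E T
  comp_left : ∀ (G E F : Type) [NormedAddCommGroup G] [NormedSpace ℝ G] [CompleteSpace G]
      [NormedAddCommGroup E] [NormedSpace ℝ E] [CompleteSpace E]
      [NormedAddCommGroup F] [NormedSpace ℝ F] [CompleteSpace F]
      (T : G →L[ℝ] E) (u : E →L[ℝ] F), mem G E T → mem G F (u.comp T)
  comp_right : ∀ (G E F : Type) [NormedAddCommGroup G] [NormedSpace ℝ G] [CompleteSpace G]
      [NormedAddCommGroup E] [NormedSpace ℝ E] [CompleteSpace E]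
      [NormedAddCommGroup F] [NormedSpace ℝ F] [CompleteSpace F]
      (T : G →L[ℝ] E) (v : F →L[ℝ] G), mem G E T → mem F E (T.comp v)

/-- A set `B` is relatively `I`-compact. -/
def RelICompact (I : OpIdeal) (E : Type) [NormedAddCommGroup E] [NormedSpace ℝ E]
    [CompleteSpace E] (B : Set E) : Prop :=
  ∃ (G : Type) (_ : NormedAddCommGroup G) (_ : NormedSpace ℝ G) (_ : CompleteSpace G)
    (M : Set G) (S : G →L[ℝ] E), IsCompact M ∧ I.mem G E S ∧ B ⊆ S '' M

/-- An `I`-compact operator. -/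
def ICompactOp (I : OpIdeal) {E F : Type} [NormedAddCommGroup E] [NormedSpace ℝ E]
    [CompleteSpace E] [NormedAddCommGroup F] [NormedSpace ℝ F] [CompleteSpace F]
    (T : E →L[ℝ] F) : Prop :=
  RelICompact I F (T '' closedBall (0:E) 1)

/-- An `I`-bounded set. -/
def IBounded (I : OpIdeal) (E : Type) [NormedAddCommGroup E] [NormedSpace ℝ E]
    [CompleteSpace E] (B : Set E) : Prop :=
  ∃ (G : Type) (_ : NormedAddCommGroup G) (_ : NormedSpace ℝ G) (_ : CompleteSpace G)
    (S : G →L[ℝ] E), I.mem G E S ∧ B ⊆ S '' closedBall (0:G) 1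

/-- A Lipschitz finite-rank map: image spans a finite-dimensional subspace. -/
def LipFinRank {X E : Type} [MetricSpace X] [NormedAddCommGroup E] [NormedSpace ℝ E]
    (x₀ : X) (f : X → E) : Prop :=
  (∃ L : NNReal, LipschitzWith L f) ∧ f x₀ = 0 ∧
    FiniteDimensional ℝ (Submodule.span ℝ (Set.range f))

theorem stmt0 (E : Type) [NormedAddCommGroup E] [NormedSpace ℝ E] :
    HasAP E ↔
      ∀ (F : Type) [NormedAddCommGroup F] [NormedSpace ℝ F] (T : F →L[ℝ] E) (K : Set F),
        IsCompact K → ∀ ε : ℝ, 0 < ε →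
          ∃ u : F →L[ℝ] E, FinRank u ∧ ∀ x ∈ K, ‖T x - u x‖ ≤ ε := by
  constructor
  · intro hAP F _ _ T K hK ε hε
    obtain ⟨S, hS, hSx⟩ := hAP (T '' K) (hK.image T.continuous) ε hε
    refine ⟨S.comp T, ?_, fun x hx => ?_⟩
    · have : LinearMap.range ((S.comp T : F →L[ℝ] E) : F →ₗ[ℝ] E) ≤
          LinearMap.range ((S : E →L[ℝ] E) : E →ₗ[ℝ] E) := by
        rintro y ⟨x, rfl⟩; exact ⟨T x, rfl⟩
      have hS' : FiniteDimensional ℝ (LinearMap.range ((S : E →L[ℝ] E) : E →ₗ[ℝ] E)) := hS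
      exact Submodule.finiteDimensional_of_le this
    · have := hSx (T x) ⟨x, hx, rfl⟩
      simpa [norm_sub_rev] using this
  · intro h K hK ε hε
    obtain ⟨u, hu, hux⟩ := h E (ContinuousLinearMap.id ℝ E) K hK ε hε
    exact ⟨u, hu, fun x hx => by simpa [norm_sub_rev] using hux x hx⟩
end

section
/- Let E be a Banach space with the approximation property. Then for every Banach space F, every compact linear operator T : F → E is a limit in operator norm of finite-rank continuous linear operators. -/
open Metric Set

theorem stmt3 (E : Type) [NormedAddCommGroup E] [NormedSpace ℝ E] [CompleteSpace E] (hE : HasAP E)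
    (F : Type) [NormedAddCommGroup F] [NormedSpace ℝ F] [CompleteSpace F] (T : F →L[ℝ] E)
    (hT : IsCompact (closure (T '' closedBall (0 : F) 1)))
    (ε : ℝ) (hε : 0 < ε) :
    ∃ u : F →L[ℝ] E, FinRank u ∧ ‖T - u‖ ≤ ε := by
  obtain ⟨S, hSfin, hS⟩ := hE (closure (T '' closedBall (0 : F) 1)) hT ε hε
  refine ⟨S.comp T, ?_, ?_⟩
  · have hle : LinearMap.range ((S.comp T : F →ₗ[ℝ] E)) ≤
        LinearMap.range (S : E →ₗ[ℝ] E) := by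
      rintro y ⟨x, rfl⟩
      exact ⟨T x, rfl⟩
    have : FiniteDimensional ℝ (LinearMap.range (S : E →ₗ[ℝ] E)) := hSfin
    exact Submodule.finiteDimensional_of_le hle
  · have key : ∀ x : F, ‖x‖ ≤ 1 → ‖(T - S.comp T) x‖ ≤ ε := by
      intro x hx
      have hmem : T x ∈ closure (T '' closedBall (0 : F) 1) :=
        subset_closure ⟨x, by simpa using hx, rfl⟩
      have := hS (T x) hmem
      simpa [norm_sub_rev] using this
    refine ContinuousLinearMap.opNorm_le_bound _ hε.le (fun x => ?_)
    rcases eq_or_ne x 0 with rfl | hx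
    · simp
    · have hnx : 0 < ‖x‖ := norm_pos_iff.mpr hx
      have h1 : ‖(‖x‖⁻¹ • x)‖ ≤ 1 := by
        rw [norm_smul, norm_inv, norm_norm]
        exact le_of_eq (inv_mul_cancel₀ hnx.ne')
      have h2 := key _ h1
      rw [map_smul, norm_smul, norm_inv, norm_norm] at h2
      calc ‖(T - S.comp T) x‖ = ‖x‖ * (‖x‖⁻¹ * ‖(T - S.comp T) x‖) := by
            field_simp
        _ ≤ ‖x‖ * ε := by
            exact mul_le_mul_of_nonneg_left h2 hnx.le
        _ = ε * ‖x‖ := mul_comm _ _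
end

section
/- Let E be a Banach space whose dual E' has the approximation property. Then for every Banach space F, every compact linear operator T : E → F is a limit in operator norm of finite-rank continuous linear operators. -/
/-!
The functionals `f ∘ T` with `‖f‖ ≤ 1` form a relatively compact set `K ⊆ E'` (Schauder), so the
approximation property of `E'` gives a finite-rank `S = ∑ φᵢ ⊗ vᵢ` on `E'`, `ε/2`-close to the
identity on `K`. The coefficients `φᵢ` lie in the bidual `E''`, but by Helly's lemma each of them
can be replaced, uniformly on the compact set `K`, by evaluation at a point `xᵢ ∈ E`. Then
`u = ∑ vᵢ ⊗ T xᵢ` satisfies `f ∘ (T - u) = g - ∑ g(xᵢ) vᵢ` with `g = f ∘ T ∈ K`, which has norm at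
most `ε`; and `‖T - u‖` is the supremum of these norms over `‖f‖ ≤ 1`.
-/

open Metric Set

theorem FinRank.exists_eq_sum_smul {X Y : Type} [NormedAddCommGroup X] [NormedSpace ℝ X]
    [NormedAddCommGroup Y] [NormedSpace ℝ Y] {S : X →L[ℝ] Y} (hS : FinRank S) :
    ∃ (n : ℕ) (φ : Fin n → StrongDual ℝ X) (v : Fin n → Y), ∀ x, S x = ∑ i, φ i x • v i := by
  have : FiniteDimensional ℝ (LinearMap.range (S : X →ₗ[ℝ] Y)) := hS
  let b := Module.finBasis ℝ (LinearMap.range (S : X →ₗ[ℝ] Y))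
  let Sr : X →L[ℝ] LinearMap.range (S : X →ₗ[ℝ] Y) :=
    S.codRestrict _ (LinearMap.mem_range_self (S : X →ₗ[ℝ] Y))
  refine ⟨_, fun i => LinearMap.toContinuousLinearMap (b.coord i) ∘L Sr, fun i => b i,
    fun x => ?_⟩
  rw [show S x = (Sr x : Y) from rfl, ← b.sum_repr (Sr x)]
  push_cast
  rfl

theorem finRank_sum_smulRight {X Y : Type} [NormedAddCommGroup X] [NormedSpace ℝ X]
    [NormedAddCommGroup Y] [NormedSpace ℝ Y] {ι : Type*} [Fintype ι]
    (φ : ι → StrongDual ℝ X) (y : ι → Y) : FinRank (∑ i, (φ i).smulRight (y i)) := by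
  have := FiniteDimensional.span_of_finite ℝ (finite_range y)
  refine Submodule.finiteDimensional_of_le (show _ ≤ Submodule.span ℝ (range y) from ?_)
  rintro - ⟨x, rfl⟩
  simp only [ContinuousLinearMap.coe_coe, FunLike.coe_sum, Finset.sum_apply,
    ContinuousLinearMap.smulRight_apply]
  exact Submodule.sum_mem _ fun i _ => Submodule.smul_mem _ _ (Submodule.subset_span ⟨i, rfl⟩)

section

variable {E F : Type*} [NormedAddCommGroup E] [NormedSpace ℝ E] [NormedAddCommGroup F]
  [NormedSpace ℝ F]

theorem ContinuousLinearMap.opNorm_le_of_forall_norm_comp_le {W : E →L[ℝ] F} {ε : ℝ}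
    (h : ∀ f : StrongDual ℝ F, ‖f‖ ≤ 1 → ‖f ∘L W‖ ≤ ε) : ‖W‖ ≤ ε := by
  have hε : 0 ≤ ε := by simpa using h 0 (by simp)
  refine W.opNorm_le_bound hε fun z => ?_
  obtain ⟨f, hf, hfz⟩ := exists_dual_vector'' ℝ (W z)
  calc ‖W z‖ = f (W z) := hfz.symm
    _ ≤ ‖(f ∘L W) z‖ := le_abs_self _
    _ ≤ ‖f ∘L W‖ * ‖z‖ := (f ∘L W).le_opNorm z
    _ ≤ ε * ‖z‖ := by gcongr; exact h f hf

theorem TotallyBounded.image_of_dist_le {α X Y : Type*} [PseudoMetricSpace X]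
    [PseudoMetricSpace Y] {S : Set α} {a : α → X} {b : α → Y} (hb : TotallyBounded (b '' S))
    (hab : ∀ f ∈ S, ∀ g ∈ S, dist (a f) (a g) ≤ dist (b f) (b g)) :
    TotallyBounded (a '' S) := by
  rw [Metric.totallyBounded_iff]
  intro ε hε
  obtain ⟨t, htS, htfin, hcover⟩ := exists_subset_image_finite_and.1
    (Metric.finite_approx_of_totallyBounded hb ε hε)
  refine ⟨a '' t, htfin.image a, ?_⟩
  rintro _ ⟨f, hf, rfl⟩
  obtain ⟨_, ⟨g, hg, rfl⟩, hfg⟩ := mem_iUnion₂.1 (hcover ⟨f, hf, rfl⟩)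
  exact mem_iUnion₂.2 ⟨a g, mem_image_of_mem a hg, (hab f hf g (htS hg)).trans_lt hfg⟩

/-- Schauder: the adjoint of a compact operator is compact. By Arzelà–Ascoli, the restrictions of
the dual unit ball to the compact set `closure (T '' closedBall 0 1)` form a totally bounded set of
bounded continuous functions, and they dominate the operator norms of the `f ∘L T`. -/
theorem totallyBounded_image_compL_closedBall {T : E →L[ℝ] F}
    (hT : IsCompact (closure (T '' closedBall 0 1))) :
    TotallyBounded ((fun f : StrongDual ℝ F => f ∘L T) '' closedBall 0 1) := by
  set K := closure (T '' closedBall (0 : E) 1)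
  have : CompactSpace K := isCompact_iff_compactSpace.1 hT
  obtain ⟨R, hR⟩ := hT.isBounded.subset_closedBall 0
  let res : StrongDual ℝ F → BoundedContinuousFunction K ℝ := fun f =>
    BoundedContinuousFunction.mkOfCompact ((f : C(F, ℝ)).restrict K)
  have hres : TotallyBounded (res '' closedBall 0 1) := by
    refine (BoundedContinuousFunction.arzela_ascoli (closedBall 0 R) (isCompact_closedBall 0 R)
      _ ?_ ?_).totallyBounded.subset subset_closure
    · rintro _ y ⟨f, hf, rfl⟩
      have hy : ‖(y : F)‖ ≤ R := by simpa using hR y.2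
      have hf : ‖f‖ ≤ 1 := by simpa using hf
      simpa [res] using (f.le_opNorm y).trans (by nlinarith [norm_nonneg (y : F), norm_nonneg f])
    · refine Metric.equicontinuous_of_continuity_modulus id Filter.tendsto_id _ ?_
      rintro y y' ⟨_, f, hf, rfl⟩
      have hf : ‖f‖ ≤ 1 := by simpa using hf
      simpa [res, Subtype.dist_eq] using
        (f.lipschitz.dist_le_mul y y').trans (mul_le_of_le_one_left dist_nonneg hf)
  refine hres.image_of_dist_le fun f _ g _ => ?_
  rw [dist_eq_norm, ← ContinuousLinearMap.sub_comp]
  refine ContinuousLinearMap.opNorm_le_of_unit_norm dist_nonneg fun x hx => ?_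
  have hTx : T x ∈ K := subset_closure ⟨x, by simp [hx], rfl⟩
  simpa [res, dist_eq_norm] using
    BoundedContinuousFunction.dist_coe_le_dist (f := res f) (g := res g) ⟨T x, hTx⟩

/-- Helly's lemma. A functional on `ι → ℝ` separating the point from the image of the ball pulls
back to some `h : StrongDual ℝ E` with `r * ‖h‖ ≤ u < φ h`, impossible when `‖φ‖ < r`. -/
theorem bidual_mem_closure_image_closedBall {ι : Type*} [Fintype ι]
    (φ : StrongDual ℝ (StrongDual ℝ E)) (g : ι → StrongDual ℝ E) {r : ℝ} (hr : ‖φ‖ < r) :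
    (fun i => φ (g i)) ∈ closure (ContinuousLinearMap.pi g '' closedBall 0 r) := by
  classical
  by_contra hp
  obtain ⟨f, u, hfu, hup⟩ := geometric_hahn_banach_closed_point
    ((convex_closedBall (0 : E) r).linear_image
      (ContinuousLinearMap.pi g : E →ₗ[ℝ] ι → ℝ)).closure isClosed_closure hp
  set h := f ∘L ContinuousLinearMap.pi g
  have hball : ∀ x ∈ closedBall (0 : E) r, h x < u :=
    fun x hx => hfu _ (subset_closure ⟨x, hx, rfl⟩)
  have hr0 : 0 < r := (norm_nonneg φ).trans_lt hr
  have hu : 0 < u := by simpa using hball 0 (mem_closedBall_self hr0.le)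
  have hh : ‖h‖ ≤ u / r := by
    refine ContinuousLinearMap.opNorm_le_of_unit_norm (by positivity) fun x hx => ?_
    have h₁ := hball (r • x) (by simp [norm_smul, hx, abs_of_pos hr0])
    have h₂ := hball (-(r • x)) (by simp [norm_smul, hx, abs_of_pos hr0])
    simp only [map_neg, map_smul, smul_eq_mul] at h₁ h₂
    rw [Real.norm_eq_abs, abs_le, ← neg_div, div_le_iff₀ hr0, le_div_iff₀ hr0]
    constructor <;> nlinarith
  have hf (y : ι → ℝ) : f y = ∑ i, y i • f (Pi.single i 1) := by
    conv_lhs => rw [← Finset.univ_sum_single y]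
    simp_rw [map_sum, ← map_smul, ← Pi.single_smul', smul_eq_mul, mul_one]
  have hh_eq : h = ∑ i, f (Pi.single i 1) • g i := by
    ext x
    rw [ContinuousLinearMap.comp_apply, hf]
    simp only [ContinuousLinearMap.pi_apply, FunLike.coe_sum, Finset.sum_apply, smul_apply,
      smul_eq_mul, mul_comm]
  have hfφ : f (fun i => φ (g i)) = φ h := by
    rw [hf, hh_eq]
    simp only [map_sum, map_smul, smul_eq_mul, mul_comm]
  have : φ h < u :=
    calc φ h ≤ ‖φ‖ * ‖h‖ := (le_abs_self _).trans (φ.le_opNorm h)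
      _ ≤ ‖φ‖ * (u / r) := by gcongr
      _ < r * (u / r) := by gcongr
      _ = u := mul_div_cancel₀ u hr0.ne'
  linarith

theorem exists_norm_le_forall_norm_apply_sub_lt {ι : Type*} [Fintype ι]
    (φ : StrongDual ℝ (StrongDual ℝ E)) (g : ι → StrongDual ℝ E) {r δ : ℝ} (hr : ‖φ‖ < r)
    (hδ : 0 < δ) : ∃ x : E, ‖x‖ ≤ r ∧ ∀ i, ‖g i x - φ (g i)‖ < δ := by
  obtain ⟨_, ⟨x, hx, rfl⟩, hxδ⟩ :=
    Metric.mem_closure_iff.1 (bidual_mem_closure_image_closedBall φ g hr) δ hδ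
  refine ⟨x, by simpa using hx, fun i => ?_⟩
  rw [← dist_eq_norm, dist_comm]
  exact (dist_le_pi_dist _ _ i).trans_lt hxδ

/-- Apply Helly's lemma on a finite `η`-net of `K`; the bound on `‖x‖` controls the error between
net points. -/
theorem exists_forall_mem_norm_bidual_sub_apply_le (φ : StrongDual ℝ (StrongDual ℝ E))
    {K : Set (StrongDual ℝ E)} (hK : IsCompact K) {δ : ℝ} (hδ : 0 < δ) :
    ∃ x : E, ∀ g ∈ K, ‖φ g - g x‖ ≤ δ := by
  set η := δ / (2 * ‖φ‖ + 2)
  have hη : 0 < η := by positivity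
  obtain ⟨t, -, htfin, hcover⟩ := Metric.finite_approx_of_totallyBounded hK.totallyBounded η hη
  have := htfin.fintype
  obtain ⟨x, hx, hxt⟩ := exists_norm_le_forall_norm_apply_sub_lt φ
    (fun w : t => (w : StrongDual ℝ E)) (lt_add_one ‖φ‖) hη
  refine ⟨x, fun g hg => ?_⟩
  obtain ⟨w, hwt, hgw⟩ := mem_iUnion₂.1 (hcover hg)
  have hgw : ‖g - w‖ ≤ η := (mem_ball_iff_norm.1 hgw).le
  calc ‖φ g - g x‖ = ‖φ (g - w) + (φ w - w x) + (w - g) x‖ := by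
        rw [map_sub, sub_apply]; congr 1; ring
    _ ≤ ‖φ (g - w)‖ + ‖φ w - w x‖ + ‖(w - g) x‖ := norm_add₃_le
    _ ≤ ‖φ‖ * η + η + η * (‖φ‖ + 1) := by
        gcongr
        · exact (φ.le_opNorm _).trans (by gcongr)
        · rw [norm_sub_rev]; exact (hxt ⟨w, hwt⟩).le
        · exact ((w - g).le_opNorm x).trans (by rw [norm_sub_rev]; gcongr)
    _ = η * (2 * ‖φ‖ + 2) := by ring
    _ = δ := div_mul_cancel₀ δ (by positivity)

end

theorem FinRank.exists_norm_sub_sum_apply_smul_le {E X : Type} [NormedAddCommGroup E]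
    [NormedSpace ℝ E] [NormedAddCommGroup X] [NormedSpace ℝ X] {S : StrongDual ℝ E →L[ℝ] X} (hS : FinRank S)
    {K : Set (StrongDual ℝ E)} (hK : IsCompact K) {ε : ℝ} (hε : 0 < ε) :
    ∃ (n : ℕ) (x : Fin n → E) (v : Fin n → X), ∀ g ∈ K, ‖S g - ∑ i, g (x i) • v i‖ ≤ ε := by
  obtain ⟨n, φ, v, hSφ⟩ := hS.exists_eq_sum_smul
  set δ := ε / (∑ i, ‖v i‖ + 1)
  have hδ : 0 < δ := by positivity
  choose x hx using fun i => exists_forall_mem_norm_bidual_sub_apply_le (φ i) hK hδ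
  refine ⟨n, x, v, fun g hg => ?_⟩
  calc ‖S g - ∑ i, g (x i) • v i‖ = ‖∑ i, (φ i g - g (x i)) • v i‖ := by
        simp only [hSφ, sub_smul, Finset.sum_sub_distrib]
    _ ≤ ∑ i, ‖φ i g - g (x i)‖ * ‖v i‖ := norm_sum_le_of_le _ fun i _ => (norm_smul _ _).le
    _ ≤ ∑ i, δ * ‖v i‖ := by gcongr with i; exact hx i g hg
    _ ≤ ε := by
        rw [← Finset.mul_sum, div_mul_eq_mul_div, div_le_iff₀ (by positivity)]
        nlinarith

theorem stmt4_general (E : Type) [NormedAddCommGroup E] [NormedSpace ℝ E] (hE' : HasAP (E →L[ℝ] ℝ))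
    (F : Type) [NormedAddCommGroup F] [NormedSpace ℝ F] (T : E →L[ℝ] F)
    (hT : IsCompact (closure (T '' closedBall (0 : E) 1)))
    (ε : ℝ) (hε : 0 < ε) :
    ∃ u : E →L[ℝ] F, FinRank u ∧ ‖T - u‖ ≤ ε := by
  set K := closure ((fun f : StrongDual ℝ F => f ∘L T) '' closedBall 0 1)
  have hK : IsCompact K :=
    (totallyBounded_image_compL_closedBall hT).closure.isCompact_of_isClosed isClosed_closure
  obtain ⟨S, hS, hSK⟩ := hE' K hK (ε / 2) (half_pos hε)
  obtain ⟨n, x, v, hxv⟩ := hS.exists_norm_sub_sum_apply_smul_le hK (half_pos hε)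
  refine ⟨∑ i, (v i).smulRight (T (x i)), finRank_sum_smulRight v _,
    ContinuousLinearMap.opNorm_le_of_forall_norm_comp_le fun f hf => ?_⟩
  set g := f ∘L T
  have hg : g ∈ K := subset_closure ⟨f, by simpa using hf, rfl⟩
  have hcomp : f ∘L (T - ∑ i, (v i).smulRight (T (x i))) = g - ∑ i, g (x i) • v i := by
    ext z
    simp [g, mul_comm]
  calc ‖f ∘L (T - ∑ i, (v i).smulRight (T (x i)))‖
      = ‖(g - S g) + (S g - ∑ i, g (x i) • v i)‖ := by rw [hcomp, sub_add_sub_cancel]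
    _ ≤ ε / 2 + ε / 2 := norm_add_le_of_le (by rw [norm_sub_rev]; exact hSK g hg) (hxv g hg)
    _ = ε := add_halves ε

theorem stmt4 (E : Type) [NormedAddCommGroup E] [NormedSpace ℝ E] [CompleteSpace E] (hE' : HasAP (E →L[ℝ] ℝ))
    (F : Type) [NormedAddCommGroup F] [NormedSpace ℝ F] [CompleteSpace F] (T : E →L[ℝ] F)
    (hT : IsCompact (closure (T '' closedBall (0 : E) 1)))
    (ε : ℝ) (hε : 0 < ε) :
    ∃ u : E →L[ℝ] F, FinRank u ∧ ‖T - u‖ ≤ ε :=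
  stmt4_general E hE' F T hT ε hε
end

section
/- Let X be a pointed metric space with basepoint 0, and E a Banach space. The map T ↦ T_L sending each Lipschitz map T : X → E with T(0) = 0 to its unique continuous linear extension T_L : Æ(X) → E (satisfying T = T_L ∘ δ_X) is an isometric isomorphism from Lip₀(X, E) with the Lipschitz norm onto the space L(Æ(X), E) of continuous linear operators with the operator norm. -/
open Metric Set

/- The universal property of the Arens–Eells space gives existence of the linearization with the
right norm bound; the density of the span of the molecules gives its uniqueness, so any
linearization has norm at most every Lipschitz constant of `f`. Conversely `T ∘ δ` is
`‖T‖`-Lipschitz for every operator `T`, because `δ` is an isometry. -/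

theorem ContinuousLinearMap.eq_of_eq_on_dense_span_range {X M F : Type*} [SeminormedAddCommGroup M]
    [NormedSpace ℝ M] [NormedAddCommGroup F] [NormedSpace ℝ F] {δ : X → M}
    (hdense : (Submodule.span ℝ (Set.range δ)).topologicalClosure = ⊤) {T S : M →L[ℝ] F}
    (h : ∀ x, T (δ x) = S (δ x)) : T = S :=
  ContinuousLinearMap.ext_on (Submodule.dense_iff_topologicalClosure_eq_top.mpr hdense)
    (by rintro _ ⟨x, rfl⟩; exact h x)

theorem ContinuousLinearMap.lipschitzWith_comp_isometry {X M F : Type*} [PseudoMetricSpace X]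
    [SeminormedAddCommGroup M] [NormedSpace ℝ M] [SeminormedAddCommGroup F] [NormedSpace ℝ F]
    {δ : X → M} (hδ : Isometry δ) (T : M →L[ℝ] F) : LipschitzWith ‖T‖₊ (fun x => T (δ x)) := by
  rw [← mul_one ‖T‖₊]
  exact T.lipschitz.comp hδ.lipschitz

theorem stmt7 (X : Type) [MetricSpace X] (x₀ : X)
    (AE : Type) [NormedAddCommGroup AE] [NormedSpace ℝ AE] [CompleteSpace AE]
    (δ : X → AE) (hδ0 : δ x₀ = 0) (hδ : Isometry δ)
    (hdense : (Submodule.span ℝ (Set.range δ)).topologicalClosure = ⊤)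
    (huniv : ∀ (W : Type) [NormedAddCommGroup W] [NormedSpace ℝ W] [CompleteSpace W]
      (f : X → W) (L : NNReal), f x₀ = 0 → LipschitzWith L f →
      ∃ T : AE →L[ℝ] W, (∀ x, T (δ x) = f x) ∧ ‖T‖ ≤ L)
    (E : Type) [NormedAddCommGroup E] [NormedSpace ℝ E] [CompleteSpace E] :
    (∀ (f : X → E) (L : NNReal), f x₀ = 0 → LipschitzWith L f →
      ∃! T : AE →L[ℝ] E, ∀ x, T (δ x) = f x) ∧
    (∀ (f : X → E) (L : NNReal), f x₀ = 0 → LipschitzWith L f →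
      ∀ T : AE →L[ℝ] E, (∀ x, T (δ x) = f x) →
        (LipschitzWith ‖T‖₊ f ∧ ∀ K : NNReal, LipschitzWith K f → ‖T‖ ≤ K)) ∧
    (∀ T : AE →L[ℝ] E, ∃ f : X → E, f x₀ = 0 ∧ LipschitzWith ‖T‖₊ f ∧
      ∀ x, T (δ x) = f x) := by
  have uniq : ∀ {T S : AE →L[ℝ] E}, (∀ x, T (δ x) = S (δ x)) → T = S :=
    ContinuousLinearMap.eq_of_eq_on_dense_span_range hdense
  refine ⟨fun f L hf0 hf => ?_, fun f L hf0 hf T hT => ⟨?_, fun K hK => ?_⟩, fun T => ?_⟩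
  · obtain ⟨T, hT, -⟩ := huniv E f L hf0 hf
    exact ⟨T, hT, fun S hS => uniq fun x => by rw [hS x, hT x]⟩
  · simpa only [hT] using T.lipschitzWith_comp_isometry hδ
  · obtain ⟨S, hS, hSK⟩ := huniv E f K hf0 hK
    obtain rfl : T = S := uniq fun x => by rw [hT x, hS x]
    exact hSK
  · exact ⟨fun x => T (δ x), by simp [hδ0], T.lipschitzWith_comp_isometry hδ, fun _ => rfl⟩
end

section
/- Let X be a pointed metric space and I an operator ideal. The following are equivalent: (1) δ_X : X → Æ(X) can be approximated uniformly on every relatively I-Lipschitz compact subset of X by Lipschitz finite-rank maps in Lip₀(X, Æ(X)); (2) for every Banach space E, every T ∈ Lip₀(X, E) can be approximated uniformly on every relatively I-Lipschitz compact subset of X by Lipschitz finite-rank maps in Lip₀(X, E). -/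
open Metric Set

theorem stmt11 (I : OpIdeal) (X : Type) [MetricSpace X] (x₀ : X)
    (AE : Type) [NormedAddCommGroup AE] [NormedSpace ℝ AE] [CompleteSpace AE]
    (δ : X → AE) (hδ0 : δ x₀ = 0) (hδ : Isometry δ)
    (hdense : (Submodule.span ℝ (Set.range δ)).topologicalClosure = ⊤)
    (huniv : ∀ (W : Type) [NormedAddCommGroup W] [NormedSpace ℝ W] [CompleteSpace W]
      (f : X → W) (L : NNReal), f x₀ = 0 → LipschitzWith L f →
      ∃ T : AE →L[ℝ] W, (∀ x, T (δ x) = f x) ∧ ‖T‖ ≤ L) :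
    (∀ K : Set X, RelICompact I AE (δ '' K) → ∀ ε : ℝ, 0 < ε →
      ∃ f : X → AE, LipFinRank x₀ f ∧ ∀ x ∈ K, ‖f x - δ x‖ ≤ ε) ↔
    (∀ (E : Type) [NormedAddCommGroup E] [NormedSpace ℝ E] [CompleteSpace E] (T : X → E) (L : NNReal),
      T x₀ = 0 → LipschitzWith L T →
      ∀ K : Set X, RelICompact I AE (δ '' K) → ∀ ε : ℝ, 0 < ε →
        ∃ f : X → E, LipFinRank x₀ f ∧ ∀ x ∈ K, ‖f x - T x‖ ≤ ε) := by
  constructor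
  · intro hAP E _ _ _ T L hT0 hTL K hK ε hε
    obtain ⟨TL, hTLδ, hTLn⟩ := huniv E T L hT0 hTL
    have hε' : (0:ℝ) < ε / ((L:ℝ) + 1) := by positivity
    obtain ⟨g, ⟨⟨Lg, hg⟩, hg0, hgfin⟩, hgapprox⟩ := hAP K hK _ hε'
    refine ⟨fun x => TL (g x), ⟨⟨‖TL‖₊ * Lg, TL.lipschitz.comp hg⟩, by simp [hg0], ?_⟩, ?_⟩
    · have hle : Submodule.span ℝ (Set.range (fun x => TL (g x))) ≤
          (Submodule.span ℝ (Set.range g)).map (TL : AE →ₗ[ℝ] E) := by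
        rw [Submodule.span_le]
        rintro _ ⟨x, rfl⟩
        exact ⟨g x, Submodule.subset_span ⟨x, rfl⟩, rfl⟩
      haveI : FiniteDimensional ℝ
          ((Submodule.span ℝ (Set.range g)).map (TL : AE →ₗ[ℝ] E)) :=
        Module.Finite.map _ _
      exact Submodule.finiteDimensional_of_le hle
    · intro x hx
      have h1 : ‖g x - δ x‖ ≤ ε / ((L:ℝ) + 1) := hgapprox x hx
      have h2 : TL (g x) - T x = TL (g x - δ x) := by
        rw [map_sub, hTLδ]
      rw [h2]
      calc ‖TL (g x - δ x)‖ ≤ ‖TL‖ * ‖g x - δ x‖ := TL.le_opNorm _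
        _ ≤ (L:ℝ) * (ε / ((L:ℝ) + 1)) := by
            apply mul_le_mul hTLn h1 (norm_nonneg _) (le_trans (norm_nonneg _) hTLn)
        _ ≤ ε := by
            rw [div_eq_inv_mul, ← mul_assoc]
            have hL1 : (0:ℝ) < (L:ℝ) + 1 := by positivity
            have : (L:ℝ) * ((L:ℝ)+1)⁻¹ ≤ 1 := by
              rw [mul_inv_le_iff₀ hL1]; linarith
            nlinarith [this, hε.le]
  · intro h K hK ε hε
    exact h AE δ 1 hδ0 (hδ.lipschitz) K hK ε hε
end

section
/- Let X, Z be pointed metric spaces and I an operator ideal. Suppose X has the I-Lipschitz approximation property with respect to Lipschitz finite-rank maps, i.e., δ_X can be approximated uniformly on relatively I-Lipschitz compact subsets of X by maps in Lip₀F(X, Æ(X)). Then for every I-Lipschitz compact mapping φ : Z → X, the map δ_X ∘ φ : Z → Æ(X) can be approximated uniformly on the unit ball B_Z = {z ∈ Z : d(z,0) ≤ 1} by Lipschitz finite-rank maps in Lip₀F(Z, Æ(X)). -/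
open Metric Set

theorem stmt12 (I : OpIdeal) (X : Type) [MetricSpace X] (x₀ : X)
    (Z : Type) [MetricSpace Z] (z₀ : Z)
    (AE : Type) [NormedAddCommGroup AE] [NormedSpace ℝ AE] [CompleteSpace AE]
    (δ : X → AE) (hδ0 : δ x₀ = 0) (hδ : Isometry δ)
    (hdense : (Submodule.span ℝ (Set.range δ)).topologicalClosure = ⊤)
    (huniv : ∀ (W : Type) [NormedAddCommGroup W] [NormedSpace ℝ W] [CompleteSpace W]
      (f : X → W) (L : NNReal), f x₀ = 0 → LipschitzWith L f →
      ∃ T : AE →L[ℝ] W, (∀ x, T (δ x) = f x) ∧ ‖T‖ ≤ L)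
    (hAP : ∀ K : Set X, RelICompact I AE (δ '' K) → ∀ ε : ℝ, 0 < ε →
      ∃ f : X → AE, LipFinRank x₀ f ∧ ∀ x ∈ K, ‖f x - δ x‖ ≤ ε)
    (φ : Z → X) (L : NNReal) (hφ0 : φ z₀ = x₀) (hφL : LipschitzWith L φ)
    (hφI : RelICompact I AE (δ '' (φ '' {z : Z | dist z z₀ ≤ 1})))
    (ε : ℝ) (hε : 0 < ε) :
    ∃ f : Z → AE, LipFinRank z₀ f ∧ ∀ z : Z, dist z z₀ ≤ 1 → ‖f z - δ (φ z)‖ ≤ ε := by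
  obtain ⟨f, ⟨⟨Lf, hLf⟩, hf0, hfd⟩, hfapp⟩ :=
    hAP (φ '' {z : Z | dist z z₀ ≤ 1}) hφI ε hε
  refine ⟨f ∘ φ, ⟨⟨Lf * L, hLf.comp hφL⟩, by simp [hφ0, hf0], ?_⟩, ?_⟩
  · have hsub : Submodule.span ℝ (Set.range (f ∘ φ)) ≤ Submodule.span ℝ (Set.range f) :=
      Submodule.span_mono (Set.range_comp_subset_range φ f)
    exact Submodule.finiteDimensional_of_le hsub
  · intro z hz
    exact hfapp (φ z) ⟨z, hz, rfl⟩
end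

section
/- Let E be a Banach space, Z a pointed metric space, and I an operator ideal. If δ_E can be approximated uniformly on relatively I-Lipschitz compact subsets of E by maps in Lip₀F(E, Æ(E)), then every I-Lipschitz compact map φ : Z → E can be approximated uniformly on B_Z = {z : d(z,0) ≤ 1} by maps of the form β_E ∘ f where f ∈ Lip₀F(Z, Æ(E)); in particular, by Lipschitz finite-rank maps Z → E. -/
open Metric Set

theorem stmt14 (I : OpIdeal) (E : Type) [NormedAddCommGroup E] [NormedSpace ℝ E] [CompleteSpace E]
    (Z : Type) [MetricSpace Z] (z₀ : Z)
    (AE : Type) [NormedAddCommGroup AE] [NormedSpace ℝ AE] [CompleteSpace AE]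
    (δ : E → AE) (hδ0 : δ (0 : E) = 0) (hδ : Isometry δ)
    (hdense : (Submodule.span ℝ (Set.range δ)).topologicalClosure = ⊤)
    (huniv : ∀ (W : Type) [NormedAddCommGroup W] [NormedSpace ℝ W] [CompleteSpace W]
      (f : E → W) (L : NNReal), f (0 : E) = 0 → LipschitzWith L f →
      ∃ T : AE →L[ℝ] W, (∀ x, T (δ x) = f x) ∧ ‖T‖ ≤ L)
    (β : AE →L[ℝ] E) (hβ : ∀ x : E, β (δ x) = x)
    (hAP : ∀ K : Set E, RelICompact I AE (δ '' K) → ∀ ε : ℝ, 0 < ε →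
      ∃ f : E → AE, LipFinRank (0 : E) f ∧ ∀ x ∈ K, ‖f x - δ x‖ ≤ ε)
    (φ : Z → E) (L : NNReal) (hφ0 : φ z₀ = 0) (hφL : LipschitzWith L φ)
    (hφI : RelICompact I AE (δ '' (φ '' {z : Z | dist z z₀ ≤ 1})))
    (ε : ℝ) (hε : 0 < ε) :
    ∃ f : Z → AE, LipFinRank z₀ f ∧ ∀ z : Z, dist z z₀ ≤ 1 → ‖β (f z) - φ z‖ ≤ ε := by
  have hβ0 : (0:ℝ) ≤ ‖β‖ := norm_nonneg _
  have hε' : 0 < ε / (‖β‖ + 1) := div_pos hε (by linarith)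
  obtain ⟨g, ⟨⟨Lg, hLg⟩, hg0, hgfd⟩, hgclose⟩ :=
    hAP (φ '' {z : Z | dist z z₀ ≤ 1}) hφI (ε / (‖β‖ + 1)) hε'
  refine ⟨g ∘ φ, ⟨⟨Lg * L, hLg.comp hφL⟩, by simp [hφ0, hg0], ?_⟩, ?_⟩
  · have hsub : Submodule.span ℝ (Set.range (g ∘ φ)) ≤ Submodule.span ℝ (Set.range g) :=
      Submodule.span_mono (by rw [Set.range_comp]; exact Set.image_subset_range _ _)
    exact Submodule.finiteDimensional_of_le hsub
  · intro z hz
    have hmem : φ z ∈ φ '' {z : Z | dist z z₀ ≤ 1} := ⟨z, hz, rfl⟩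
    have h1 : ‖g (φ z) - δ (φ z)‖ ≤ ε / (‖β‖ + 1) := hgclose _ hmem
    have h2 : β ((g ∘ φ) z) - φ z = β (g (φ z) - δ (φ z)) := by
      simp [map_sub, hβ]
    rw [h2]
    calc ‖β (g (φ z) - δ (φ z))‖ ≤ ‖β‖ * ‖g (φ z) - δ (φ z)‖ := β.le_opNorm _
      _ ≤ ‖β‖ * (ε / (‖β‖ + 1)) := by
          exact mul_le_mul_of_nonneg_left h1 hβ0
      _ ≤ ε := by
          rw [mul_div_assoc']
          exact (div_le_iff₀ (by linarith)).2 (by nlinarith)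
end

section
/- Let E be a Banach space and I an operator ideal. Every relatively I-Lipschitz compact subset of E is relatively I-compact in E. -/
open Metric Set

theorem stmt17 (I : OpIdeal) (E : Type) [NormedAddCommGroup E] [NormedSpace ℝ E] [CompleteSpace E]
    (AE : Type) [NormedAddCommGroup AE] [NormedSpace ℝ AE] [CompleteSpace AE]
    (δ : E → AE) (hδ0 : δ (0 : E) = 0) (hδ : Isometry δ)
    (hdense : (Submodule.span ℝ (Set.range δ)).topologicalClosure = ⊤)
    (huniv : ∀ (W : Type) [NormedAddCommGroup W] [NormedSpace ℝ W] [CompleteSpace W]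
      (f : E → W) (L : NNReal), f (0 : E) = 0 → LipschitzWith L f →
      ∃ T : AE →L[ℝ] W, (∀ x, T (δ x) = f x) ∧ ‖T‖ ≤ L)
    (β : AE →L[ℝ] E) (hβ : ∀ x : E, β (δ x) = x)
    (K : Set E) (hK : RelICompact I AE (δ '' K)) : RelICompact I E K := by
  obtain ⟨G, _, _, _, M, S, hM, hS, hsub⟩ := hK
  refine ⟨G, ‹_›, ‹_›, ‹_›, M, β.comp S, hM, I.comp_left G AE E S β hS, ?_⟩
  intro x hx
  obtain ⟨m, hm, hmx⟩ := hsub ⟨x, hx, rfl⟩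
  exact ⟨m, hm, by simp only [ContinuousLinearMap.comp_apply, hmx, hβ]⟩
end

section
/- Let I be an operator ideal and let I_Lip = I ∘ Lip₀ denote the composition Lipschitz ideal. For a pointed metric space X, a Banach space E, and T ∈ Lip₀(X, E), the following are equivalent: (1) T = u ∘ S for some Banach space G, some S ∈ Lip₀(X, G) and u ∈ I(G, E); (2) the linearization T_L : Æ(X) → E belongs to I(Æ(X), E). -/
open Metric Set

theorem stmt18 (I : OpIdeal) (X : Type) [MetricSpace X] (x₀ : X) (E : Type) [NormedAddCommGroup E] [NormedSpace ℝ E] [CompleteSpace E]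
    (AE : Type) [NormedAddCommGroup AE] [NormedSpace ℝ AE] [CompleteSpace AE]
    (δ : X → AE) (hδ0 : δ x₀ = 0) (hδ : Isometry δ)
    (hdense : (Submodule.span ℝ (Set.range δ)).topologicalClosure = ⊤)
    (huniv : ∀ (W : Type) [NormedAddCommGroup W] [NormedSpace ℝ W] [CompleteSpace W]
      (f : X → W) (L : NNReal), f x₀ = 0 → LipschitzWith L f →
      ∃ T : AE →L[ℝ] W, (∀ x, T (δ x) = f x) ∧ ‖T‖ ≤ L)
    (T : X → E) (L : NNReal) (hT0 : T x₀ = 0) (hTL : LipschitzWith L T)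
    (TL : AE →L[ℝ] E) (hTLδ : ∀ x, TL (δ x) = T x) :
    (∃ (G : Type) (_ : NormedAddCommGroup G) (_ : NormedSpace ℝ G) (_ : CompleteSpace G)
      (S : X → G) (u : G →L[ℝ] E) (L' : NNReal),
        S x₀ = 0 ∧ LipschitzWith L' S ∧ I.mem G E u ∧ ∀ x, T x = u (S x)) ↔
      I.mem AE E TL := by
  constructor
  · rintro ⟨G, _, _, _, S, u, L', hS0, hSL, hu, hTS⟩
    obtain ⟨SL, hSLδ, -⟩ := huniv G S L' hS0 hSL
    have : TL = u.comp SL := by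
      apply ContinuousLinearMap.ext_on
        (Submodule.dense_iff_topologicalClosure_eq_top.mpr hdense)
      rintro _ ⟨x, rfl⟩
      simp [hTLδ, hSLδ, hTS]
    rw [this]
    exact I.comp_right _ _ _ u SL hu
  · intro h
    exact ⟨AE, inferInstance, inferInstance, inferInstance, δ, TL, 1, hδ0,
      hδ.lipschitz, h, fun x => (hTLδ x).symm⟩
end
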